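/- arXiv:1702.04795 — 3 statements merged into one kernel-verified Lean document; each statement's English description precedes it below -/
import Mathlib

section
/- Let R=(r_n) be a regular sequence. Then for every operator f on R, the set {n ∈ ℕ : f(n) = 0} is either finite or cofinite in ℕ. -/
open Filter

/-- `r` satisfies a linear recurrence relation over `ℤ` whose characteristic
polynomial `X^k - ∑_{i<k} cᵢ X^i` is the minimal polynomial of `θ` over `ℚ`. -/
def SatisfiesRecurrenceMinpoly (r : ℕ → ℕ) (θ : ℝ) : Prop :=
  ∃ k : ℕ, 0 < k ∧ ∃ c : ℕ → ℤ,
    (∀ n : ℕ, (r (n + k) : ℤ) = ∑ i ∈ Finset.range k, c i * r (n + i)) ∧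
    (Polynomial.X ^ k - ∑ i ∈ Finset.range k, Polynomial.C (c i : ℚ) * Polynomial.X ^ i)
      = minpoly ℚ θ

/-- A strictly increasing sequence `r` of naturals is regular if the ratios
`r (n+1) / r n` tend to `∞` or converge to some real `θ > 1` which, if
algebraic, is such that `r` satisfies a linear recurrence whose characteristic
polynomial is the minimal polynomial of `θ`. -/
def IsRegularSequence (r : ℕ → ℕ) : Prop :=
  StrictMono r ∧
    (Tendsto (fun n => (r (n + 1) : ℝ) / r n) atTop atTop ∨
      ∃ θ : ℝ, 1 < θ ∧ Tendsto (fun n => (r (n + 1) : ℝ) / r n) atTop (nhds θ) ∧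
        (IsAlgebraic ℚ θ → SatisfiesRecurrenceMinpoly r θ))

/-!
If the ratios tend to `∞`, then `f(n) / r(n+d) → a_d ≠ 0`. If they tend to `θ`, then
`f(n) / r(n) → P(θ)` with `P = ∑ aᵢ Xⁱ`; so `f` has finitely many zeros unless `P(θ) = 0`. In that
case `θ` is algebraic and its minimal polynomial divides `P`; since the minimal polynomial, evaluated
at the shift operator, annihilates `r`, so does `P`, i.e. `f` vanishes identically.
-/

open Polynomial Topology

section Shift

variable (R : Type*) [CommSemiring R]

noncomputable def seqShift : Module.End R (ℕ → R) :=
  LinearMap.funLeft R R Nat.succ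

variable {R}

theorem seqShift_pow_apply (i : ℕ) (s : ℕ → R) (n : ℕ) :
    (seqShift R ^ i) s n = s (n + i) := by
  induction i generalizing n with
  | zero => rfl
  | succ j ih =>
    rw [pow_succ', Module.End.mul_apply]
    exact (ih (n + 1)).trans (by rw [add_assoc, add_comm 1 j])

theorem aeval_seqShift_sum_apply (N : ℕ) (b : ℕ → R) (s : ℕ → R) (n : ℕ) :
    aeval (seqShift R) (∑ i ∈ Finset.range N, C (b i) * X ^ i) s n
      = ∑ i ∈ Finset.range N, b i * s (n + i) := by
  simp only [map_sum, map_mul, aeval_C, aeval_X_pow, LinearMap.coe_sum, Finset.sum_apply,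
    Module.End.mul_apply, Module.algebraMap_end_apply, Pi.smul_apply, seqShift_pow_apply,
    smul_eq_mul]

end Shift

theorem SatisfiesRecurrenceMinpoly.aeval_seqShift_minpoly {r : ℕ → ℕ} {θ : ℝ}
    (h : SatisfiesRecurrenceMinpoly r θ) :
    aeval (seqShift ℚ) (minpoly ℚ θ) (fun n => (r n : ℚ)) = 0 := by
  obtain ⟨k, -, c, hrec, hmin⟩ := h
  funext n
  have hrecℚ : (r (n + k) : ℚ) = ∑ i ∈ Finset.range k, (c i : ℚ) * r (n + i) := by
    exact_mod_cast hrec n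
  rw [← hmin, map_sub, LinearMap.sub_apply, Pi.sub_apply, aeval_X_pow, seqShift_pow_apply,
    aeval_seqShift_sum_apply, hrecℚ, sub_self, Pi.zero_apply]

theorem SatisfiesRecurrenceMinpoly.sum_eq_zero_of_aeval_eq_zero {r : ℕ → ℕ} {θ : ℝ}
    (h : SatisfiesRecurrenceMinpoly r θ) {N : ℕ} {b : ℕ → ℚ}
    (hb : aeval θ (∑ i ∈ Finset.range N, C (b i) * X ^ i) = 0) (n : ℕ) :
    ∑ i ∈ Finset.range N, b i * r (n + i) = 0 := by
  obtain ⟨Q, hQ⟩ := minpoly.dvd ℚ θ hb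
  rw [← aeval_seqShift_sum_apply N b (fun m => (r m : ℚ)) n, hQ, mul_comm, map_mul,
    Module.End.mul_apply, h.aeval_seqShift_minpoly, map_zero, Pi.zero_apply]

theorem tendsto_div_add_pow {r : ℕ → ℝ} (hr : ∀ᶠ n in atTop, r n ≠ 0) {θ : ℝ}
    (hθ : Tendsto (fun n => r (n + 1) / r n) atTop (𝓝 θ)) (i : ℕ) :
    Tendsto (fun n => r (n + i) / r n) atTop (𝓝 (θ ^ i)) := by
  induction i with
  | zero =>
    refine tendsto_const_nhds.congr' ?_
    filter_upwards [hr] with n hn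
    rw [add_zero, div_self hn, pow_zero]
  | succ j ih =>
    have hstep := (hθ.comp (tendsto_add_atTop_nat j)).mul ih
    rw [← pow_succ'] at hstep
    refine hstep.congr' ?_
    filter_upwards [hr, (tendsto_add_atTop_nat j).eventually hr] with n hn hnj
    exact div_mul_div_cancel₀ hnj

theorem tendsto_div_add_zero {r : ℕ → ℝ} (hr : ∀ᶠ n in atTop, r n ≠ 0)
    (hinf : Tendsto (fun n => r (n + 1) / r n) atTop atTop) {j : ℕ} (hj : 0 < j) :
    Tendsto (fun n => r n / r (n + j)) atTop (𝓝 0) := by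
  induction j, hj using Nat.le_induction with
  | base => exact hinf.inv_tendsto_atTop.congr fun n => inv_div _ _
  | succ j _ ih =>
    have hstep := ih.mul ((hinf.comp (tendsto_add_atTop_nat j)).inv_tendsto_atTop)
    rw [mul_zero] at hstep
    refine hstep.congr' ?_
    filter_upwards [(tendsto_add_atTop_nat j).eventually hr] with n hnj
    simp only [Function.comp_apply, Pi.inv_apply, inv_div]
    exact div_mul_div_cancel₀ hnj

theorem finite_setOf_eq_zero_of_tendsto_div {F w : ℕ → ℝ} {L : ℝ} (hL : L ≠ 0)
    (h : Tendsto (fun n => F n / w n) atTop (𝓝 L)) : {n | F n = 0}.Finite := by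
  have hne := h.eventually_ne hL
  rw [← Nat.cofinite_eq_atTop, eventually_cofinite] at hne
  exact hne.subset fun n hn => by simp [Set.mem_ofPred_eq.mp hn]

theorem finite_operator_zeros_of_tendsto {r : ℕ → ℕ} {d : ℕ} {a : ℕ → ℤ} {w c : ℕ → ℝ}
    (hc : ∀ i ∈ Finset.range (d + 1), Tendsto (fun n => (r (n + i) : ℝ) / w n) atTop (𝓝 (c i)))
    (hL : ∑ i ∈ Finset.range (d + 1), (a i : ℝ) * c i ≠ 0) :
    {n : ℕ | (∑ i ∈ Finset.range (d + 1), a i * (r (n + i) : ℤ)) = 0}.Finite := by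
  have hlim := tendsto_finsetSum _ fun i hi => (hc i hi).const_mul (a i : ℝ)
  refine (finite_setOf_eq_zero_of_tendsto_div (F := fun n => ∑ i ∈ Finset.range (d + 1),
    (a i : ℝ) * r (n + i)) (w := w) hL (hlim.congr fun n => ?_)).subset fun n hn => ?_
  · simp only [Finset.sum_div, mul_div_assoc]
  · simp only [Set.mem_ofPred_eq] at hn ⊢
    exact_mod_cast hn

theorem finite_operator_zeros_of_tendsto_atTop {r : ℕ → ℕ} (hr : ∀ᶠ n in atTop, (r n : ℝ) ≠ 0)
    (hinf : Tendsto (fun n => (r (n + 1) : ℝ) / r n) atTop atTop) {d : ℕ} {a : ℕ → ℤ}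
    (had : a d ≠ 0) :
    {n : ℕ | (∑ i ∈ Finset.range (d + 1), a i * (r (n + i) : ℤ)) = 0}.Finite := by
  refine finite_operator_zeros_of_tendsto (w := fun n => (r (n + d) : ℝ))
    (c := fun i => if i = d then 1 else 0) (fun i hi => ?_) (by simpa using had)
  rcases (Nat.lt_succ_iff.mp (Finset.mem_range.mp hi)).lt_or_eq with hid | rfl
  · rw [if_neg hid.ne]
    refine ((tendsto_div_add_zero hr hinf (Nat.sub_pos_of_lt hid)).comp
      (tendsto_add_atTop_nat i)).congr fun n => ?_
    rw [Function.comp_apply, add_assoc, Nat.add_sub_cancel' hid.le]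
  · rw [if_pos rfl]
    refine tendsto_const_nhds.congr' ?_
    filter_upwards [(tendsto_add_atTop_nat i).eventually hr] with n hn
    exact (div_self hn).symm

/-- for a regular sequence `r`, the zero set of any operator
`f(n) = a₀ r n + ⋯ + a_d r (n+d)` is finite or cofinite in `ℕ`. -/
theorem operator_zeros_finite_or_cofinite_of_regular
    (r : ℕ → ℕ) (hr : IsRegularSequence r)
    (d : ℕ) (a : ℕ → ℤ) (had : a d ≠ 0) :
    {n : ℕ | (∑ i ∈ Finset.range (d + 1), a i * (r (n + i) : ℤ)) = 0}.Finite ∨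
      {n : ℕ | (∑ i ∈ Finset.range (d + 1), a i * (r (n + i) : ℤ)) ≠ 0}.Finite := by
  obtain ⟨hmono, hratio⟩ := hr
  have hr0 : ∀ᶠ n in atTop, (r n : ℝ) ≠ 0 := by
    filter_upwards [eventually_ge_atTop 1] with n hn
    exact_mod_cast (Nat.lt_of_lt_of_le hn (hmono.id_le n)).ne'
  rcases hratio with hinf | ⟨θ, -, hθ, halg⟩
  · exact .inl (finite_operator_zeros_of_tendsto_atTop hr0 hinf had)
  · set P : ℚ[X] := ∑ i ∈ Finset.range (d + 1), C (a i : ℚ) * X ^ i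
    by_cases hP : aeval θ P = 0
    · right
      have hPne : P ≠ 0 := fun h0 => had <| by
        simpa [P, finsetSum_coeff, coeff_C_mul, coeff_X_pow] using congrArg (coeff · d) h0
      have hzero := (halg ⟨P, hPne, hP⟩).sum_eq_zero_of_aeval_eq_zero hP
      refine Set.finite_empty.subset fun n hn => hn ?_
      exact_mod_cast hzero n
    · left
      refine finite_operator_zeros_of_tendsto (w := fun n => (r n : ℝ)) (c := fun i => θ ^ i)
        (fun i _ => tendsto_div_add_pow hr0 hθ i) ?_
      simpa [P] using hP
end

section
/- Let R=(r_n) be a regular sequence and let f_1,…,f_k be operators on R. Then the set {f_1(n_1)+⋯+f_k(n_k) : (n_1,…,n_k) ∈ ℕ^k} ∩ ℕ is not piecewise syndetic. -/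
/-!
Every operator on a regular sequence `r` is either identically zero or of exact order
`r (n + D)` for some shift `D`. If `r (n + 1) / r n → θ`, the operator with coefficient
polynomial `p` behaves like `p(θ) r n`, and `p(θ) = 0` forces it to vanish on `r` (through the
recurrence when `θ` is algebraic); if `r (n + 1) / r n → ∞`, its leading term dominates.

As `r` grows geometrically, a sum of `k` such terms lying in a window `[M, M + L]` either has
all indices bounded, or has two indices within bounded distance (and is then a sum of `k - 1`
operators after merging those two), or its term of largest index dominates all others, and
then that index is confined to `O(log L)` values. By induction on `k`, every window of length
`L` contains `O((log L)^k)` such sums, which rules out arbitrarily long runs with bounded gaps.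
-/

open Filter

/-- `A ⊆ ℕ` is piecewise syndetic: for some gap bound `d`, there are arbitrarily
long increasing sequences of elements of `A` with consecutive gaps at most `d`. -/
def PiecewiseSyndetic (A : Set ℕ) : Prop :=
  ∃ d : ℕ, ∀ k : ℕ, ∃ a : ℕ → ℕ,
    (∀ i < k, a i ∈ A) ∧
    (∀ i, i + 1 < k → a i < a (i + 1) ∧ a (i + 1) - a i ≤ d)

open Polynomial Pointwise Set

/-! ### Sums of sequences evaluated at chosen indices -/

def sumsOver (s : Multiset (ℕ → ℤ)) (I : Set ℕ) : Set ℤ := (s.map (· '' I)).sum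

section sumsOver

open scoped Classical

variable {s : Multiset (ℕ → ℤ)} {I J : Set ℕ}

@[simp]
lemma sumsOver_zero (I : Set ℕ) : sumsOver 0 I = 0 := rfl

@[simp]
lemma sumsOver_cons (u : ℕ → ℤ) (s : Multiset (ℕ → ℤ)) (I : Set ℕ) :
    sumsOver (u ::ₘ s) I = u '' I + sumsOver s I := by
  simp [sumsOver]

lemma sumsOver_eq_add_erase {u : ℕ → ℤ} (hu : u ∈ s) (I : Set ℕ) :
    sumsOver s I = u '' I + sumsOver (s.erase u) I := by
  rw [← sumsOver_cons, Multiset.cons_erase hu]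

lemma sumsOver_erase_zero (h : (0 : ℕ → ℤ) ∈ s) : sumsOver (s.erase 0) univ = sumsOver s univ := by
  rw [sumsOver_eq_add_erase h univ, image_univ, Pi.zero_def, range_const, singleton_zero, zero_add]

lemma mem_sumsOver_cons {u : ℕ → ℤ} {v : ℤ} :
    v ∈ sumsOver (u ::ₘ s) I ↔ ∃ n ∈ I, ∃ w ∈ sumsOver s I, u n + w = v := by
  simp [Set.mem_add]

lemma add_mem_sumsOver_erase {u : ℕ → ℤ} (hu : u ∈ s) {n : ℕ} (hn : n ∈ I) {w : ℤ}
    (hw : w ∈ sumsOver (s.erase u) I) : u n + w ∈ sumsOver s I := by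
  rw [sumsOver_eq_add_erase hu]
  exact Set.add_mem_add (mem_image_of_mem u hn) hw

lemma sumsOver_mono (h : I ⊆ J) : sumsOver s I ⊆ sumsOver s J := by
  induction s using Multiset.induction_on with
  | empty => exact subset_rfl
  | cons u s ih => simpa using Set.add_subset_add (image_mono h) ih

lemma Set.Finite.sumsOver (hI : I.Finite) : (sumsOver s I).Finite := by
  induction s using Multiset.induction_on with
  | empty => exact finite_zero
  | cons u s ih => simpa using (hI.image u).add ih

lemma abs_le_of_mem_sumsOver {X : ℝ} (h : ∀ u ∈ s, ∀ n ∈ I, |(u n : ℝ)| ≤ X) {w : ℤ}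
    (hw : w ∈ sumsOver s I) : |(w : ℝ)| ≤ Multiset.card s * X := by
  induction s using Multiset.induction_on generalizing w with
  | empty => simp_all
  | cons u s ih =>
    obtain ⟨n, hn, w', hw', rfl⟩ := mem_sumsOver_cons.1 hw
    have hun := h u (Multiset.mem_cons_self u s) n hn
    have hw'X := ih (fun v hv => h v (Multiset.mem_cons_of_mem hv)) hw'
    push_cast
    calc |(u n : ℝ) + w'| ≤ |(u n : ℝ)| + |(w' : ℝ)| := abs_add_le _ _
      _ ≤ (Multiset.card (u ::ₘ s) : ℝ) * X := by
          rw [Multiset.card_cons]; push_cast; linarith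

lemma exists_add_mem_sumsOver_Iic (hs : s ≠ 0) {v : ℤ} (hv : v ∈ sumsOver s univ) :
    ∃ u ∈ s, ∃ n, ∃ w ∈ sumsOver (s.erase u) (Iic n), u n + w = v := by
  induction s using Multiset.induction_on generalizing v with
  | empty => exact absurd rfl hs
  | cons u s ih =>
    obtain ⟨n, -, w, hw, rfl⟩ := mem_sumsOver_cons.1 hv
    rcases eq_or_ne s 0 with rfl | hs'
    · exact ⟨u, Multiset.mem_cons_self u 0, n, w, by simpa using hw, rfl⟩
    obtain ⟨u', hu', n', w', hw', rfl⟩ := ih hs' hw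
    rcases le_total n' n with hle | hle
    · refine ⟨u, Multiset.mem_cons_self u s, n, u' n' + w', ?_, rfl⟩
      rw [Multiset.erase_cons_head]
      exact add_mem_sumsOver_erase hu' (mem_Iic.2 hle) (sumsOver_mono (Iic_subset_Iic.2 hle) hw')
    · refine ⟨u', Multiset.mem_cons_of_mem hu', n', u n + w', ?_, by ring⟩
      rw [Multiset.erase_cons_tail_of_mem hu', mem_sumsOver_cons]
      exact ⟨n, hle, w', hw', rfl⟩

lemma mem_sumsOver_or_exists_add {w : ℤ} (hw : w ∈ sumsOver s I) :
    w ∈ sumsOver s J ∨ ∃ u ∈ s, ∃ n ∈ I \ J, ∃ w' ∈ sumsOver (s.erase u) I, u n + w' = w := by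
  induction s using Multiset.induction_on generalizing w with
  | empty => simp_all
  | cons u s ih =>
    obtain ⟨n, hn, w, hw₀, rfl⟩ := mem_sumsOver_cons.1 hw
    by_cases hnJ : n ∈ J
    · rcases ih hw₀ with hwJ | ⟨u', hu', n', hn', w', hw', rfl⟩
      · exact Or.inl (mem_sumsOver_cons.2 ⟨n, hnJ, w, hwJ, rfl⟩)
      · refine Or.inr ⟨u', Multiset.mem_cons_of_mem hu', n', hn', u n + w', ?_, by ring⟩
        rw [Multiset.erase_cons_tail_of_mem hu', mem_sumsOver_cons]
        exact ⟨n, hn, w', hw', rfl⟩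
    · exact Or.inr ⟨u, Multiset.mem_cons_self u s, n, ⟨hn, hnJ⟩, w, by simpa using hw₀, rfl⟩

lemma sum_apply_mem_sumsOver {ι : Type*} (t : Finset ι) (f : ι → ℕ → ℤ) (n : ι → ℕ) :
    ∑ j ∈ t, f j (n j) ∈ sumsOver (t.val.map f) univ := by
  have : sumsOver (t.val.map f) univ = ∑ j ∈ t, f j '' univ := by
    rw [sumsOver, Multiset.map_map]; rfl
  rw [this, Set.mem_finsetSum]
  exact ⟨fun j => f j (n j), fun _ => mem_image_of_mem _ (mem_univ _), rfl⟩

end sumsOver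

/-! ### Sets with polylogarithmically many points in every window -/

def LogSparse (k : ℕ) (S : Set ℤ) : Prop :=
  ∃ C : ℝ, ∀ (M : ℤ) (L : ℕ), ((S ∩ Icc M (M + L)).ncard : ℝ) ≤ C * (1 + Real.log (L + 1)) ^ k

lemma one_le_one_add_log_succ (L : ℕ) : (1 : ℝ) ≤ 1 + Real.log (L + 1) := by
  have : 0 ≤ Real.log ((L : ℝ) + 1) := Real.log_nonneg (by linarith [L.cast_nonneg (α := ℝ)])
  linarith

lemma ncard_vadd_inter_Icc (T : Set ℤ) (e M : ℤ) (L : ℕ) :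
    ((e +ᵥ T) ∩ Icc M (M + L)).ncard = (T ∩ Icc (M - e) (M - e + L)).ncard := by
  rw [show Icc M (M + L) = e +ᵥ Icc (M - e) (M - e + L) by rw [vadd_Icc]; congr 1 <;> ring,
    ← vadd_set_inter, ncard_vadd_set]

namespace LogSparse

variable {k : ℕ} {S T : Set ℤ}

lemma exists_nonneg (h : LogSparse k S) : ∃ C : ℝ, 0 ≤ C ∧ ∀ (M : ℤ) (L : ℕ),
    ((S ∩ Icc M (M + L)).ncard : ℝ) ≤ C * (1 + Real.log (L + 1)) ^ k := by
  obtain ⟨C, hC⟩ := h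
  refine ⟨C, ?_, hC⟩
  simpa using (Nat.cast_nonneg _).trans (hC 0 0)

lemma mono {k' : ℕ} (hT : LogSparse k T) (hST : S ⊆ T) (hk : k ≤ k') : LogSparse k' S := by
  obtain ⟨C, hC0, hC⟩ := hT.exists_nonneg
  refine ⟨C, fun M L => ?_⟩
  calc ((S ∩ Icc M (M + L)).ncard : ℝ) ≤ (T ∩ Icc M (M + L)).ncard := by
        gcongr
        exact (finite_Icc _ _).inter_of_right _
    _ ≤ C * (1 + Real.log (L + 1)) ^ k := hC M L
    _ ≤ C * (1 + Real.log (L + 1)) ^ k' := by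
        gcongr
        exact one_le_one_add_log_succ L

lemma union (hS : LogSparse k S) (hT : LogSparse k T) : LogSparse k (S ∪ T) := by
  obtain ⟨C, hC⟩ := hS
  obtain ⟨D, hD⟩ := hT
  refine ⟨C + D, fun M L => ?_⟩
  calc (((S ∪ T) ∩ Icc M (M + L)).ncard : ℝ)
      ≤ (S ∩ Icc M (M + L)).ncard + (T ∩ Icc M (M + L)).ncard := by
        rw [union_inter_distrib_right]; exact_mod_cast ncard_union_le _ _
    _ ≤ (C + D) * (1 + Real.log (L + 1)) ^ k := by linarith [hC M L, hD M L]

lemma biUnion {ι : Type*} (t : Finset ι) {S : ι → Set ℤ} (h : ∀ i ∈ t, LogSparse k (S i)) :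
    LogSparse k (⋃ i ∈ t, S i) := by
  classical
  induction t using Finset.induction_on with
  | empty => exact ⟨0, fun M L => by simp⟩
  | insert i t hi ih =>
    rw [Finset.set_biUnion_insert]
    exact (h i (t.mem_insert_self i)).union (ih fun j hj => h j (Finset.mem_insert_of_mem hj))

lemma of_finite (hS : S.Finite) : LogSparse k S := by
  refine ⟨S.ncard, fun M L => ?_⟩
  calc ((S ∩ Icc M (M + L)).ncard : ℝ) ≤ S.ncard := by
        exact_mod_cast ncard_le_ncard inter_subset_left hS
    _ ≤ S.ncard * (1 + Real.log (L + 1)) ^ k :=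
        le_mul_of_one_le_right (Nat.cast_nonneg _) (one_le_pow₀ (one_le_one_add_log_succ L))

lemma of_subset_translates (hT : LogSparse k T) (K : ℝ)
    (h : ∀ (M : ℤ) (L : ℕ), ∃ E : Finset ℤ, (E.card : ℝ) ≤ K * (1 + Real.log (L + 1)) ∧
      S ∩ Icc M (M + L) ⊆ ⋃ e ∈ E, e +ᵥ T) :
    LogSparse (k + 1) S := by
  obtain ⟨C, hC0, hC⟩ := hT.exists_nonneg
  refine ⟨K * C, fun M L => ?_⟩
  obtain ⟨E, hE, hcover⟩ := h M L
  set B := 1 + Real.log (L + 1)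
  have hsub : S ∩ Icc M (M + L) ⊆ ⋃ e ∈ E, (e +ᵥ T) ∩ Icc M (M + L) := by
    intro v hv
    obtain ⟨e, he, hve⟩ := mem_iUnion₂.1 (hcover hv)
    exact mem_iUnion₂.2 ⟨e, he, hve, hv.2⟩
  calc ((S ∩ Icc M (M + L)).ncard : ℝ)
      ≤ ((⋃ e ∈ E, (e +ᵥ T) ∩ Icc M (M + L)).ncard : ℝ) := by
        gcongr
        exact (finite_Icc M (M + L)).subset (iUnion₂_subset fun _ _ => inter_subset_right)
    _ ≤ ∑ e ∈ E, (((e +ᵥ T) ∩ Icc M (M + L)).ncard : ℝ) := by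
        exact_mod_cast E.set_ncard_biUnion_le _
    _ ≤ ∑ e ∈ E, C * B ^ k := by
        gcongr with e
        rw [ncard_vadd_inter_Icc]
        exact hC _ L
    _ = E.card * (C * B ^ k) := by rw [Finset.sum_const, nsmul_eq_mul]
    _ ≤ K * B * (C * B ^ k) := by
        gcongr
        exact mul_nonneg hC0 (pow_nonneg (zero_le_one.trans (one_le_one_add_log_succ L)) _)
    _ = K * C * B ^ (k + 1) := by ring

end LogSparse

lemma exists_const_mul_pow_log_le (k : ℕ) (C : ℝ) {ε : ℝ} (hε : 0 < ε) :
    ∃ L : ℕ, C * (1 + Real.log (L + 1)) ^ k ≤ ε * L := by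
  set A := |C| * 2 ^ k + 1
  have hA : 0 < A := by positivity
  have hlim : Tendsto (fun L : ℕ => Real.log ((L : ℝ) + 1) ^ k / (1 * ((L : ℝ) + 1) + -1))
      atTop (nhds 0) :=
    (Real.tendsto_pow_log_div_mul_add_atTop 1 (-1) k one_ne_zero).comp
      (tendsto_atTop_add_const_right _ 1 tendsto_natCast_atTop_atTop)
  obtain ⟨L, hsmall, hLe⟩ := ((hlim.eventually (gt_mem_nhds (div_pos hε hA))).and
    ((tendsto_natCast_atTop_atTop (R := ℝ)).eventually (eventually_ge_atTop (Real.exp 1)))).exists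
  have hL0 : (0 : ℝ) < L := (Real.exp_pos 1).trans_le hLe
  have hlog : 1 ≤ Real.log ((L : ℝ) + 1) := by
    rw [Real.le_log_iff_exp_le (by positivity)]; linarith
  simp only [one_mul, ← sub_eq_add_neg, add_sub_cancel_right] at hsmall
  rw [div_lt_div_iff₀ hL0 hA] at hsmall
  refine ⟨L, ?_⟩
  calc C * (1 + Real.log (L + 1)) ^ k ≤ |C| * (2 * Real.log (L + 1)) ^ k := by
        gcongr
        · exact le_abs_self C
        · linarith
    _ ≤ A * Real.log (L + 1) ^ k := by
        rw [mul_pow]; nlinarith [pow_nonneg (zero_le_one.trans hlog) k]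
    _ ≤ ε * L := by linarith

lemma le_ncard_inter_Icc_of_chain {S : Set ℤ} {d K : ℕ} {a : ℕ → ℕ}
    (ha : ∀ i < K, (a i : ℤ) ∈ S)
    (hchain : ∀ i, i + 1 < K → a i < a (i + 1) ∧ a (i + 1) - a i ≤ d) :
    K ≤ (S ∩ Icc (a 0 : ℤ) (a 0 + d * (K - 1) : ℕ)).ncard := by
  have hmono : StrictMonoOn a (Iio K) := strictMonoOn_of_lt_succ ordConnected_Iio
    fun i _ _ hi => by simpa using (hchain i (by simpa using hi)).1
  have hbound : ∀ i < K, a 0 ≤ a i ∧ a i ≤ a 0 + d * i := by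
    intro i hi
    induction i with
    | zero => simp
    | succ i ih =>
      have := hchain i hi
      have := ih (by omega)
      rw [Nat.mul_succ]
      omega
  have hinj : InjOn (fun i => (a i : ℤ)) (Finset.range K) := fun i hi j hj hij =>
    hmono.injOn (by simpa using hi) (by simpa using hj) (Nat.cast_injective hij)
  calc K = ((Finset.range K).image fun i => (a i : ℤ)).card := by
        rw [Finset.card_image_of_injOn hinj, Finset.card_range]
    _ ≤ (S ∩ Icc (a 0 : ℤ) (a 0 + d * (K - 1) : ℕ)).ncard := by
        rw [← ncard_coe_finset]
        refine ncard_le_ncard (fun v hv => ?_) ((finite_Icc _ _).inter_of_right _)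
        obtain ⟨i, hi, rfl⟩ := Finset.mem_image.1 (Finset.mem_coe.1 hv)
        have hi := Finset.mem_range.1 hi
        have := hbound i hi
        have : d * i ≤ d * (K - 1) := Nat.mul_le_mul_left d (by omega)
        exact ⟨ha i hi, by omega, by omega⟩

lemma PiecewiseSyndetic.mono {A B : Set ℕ} (hA : PiecewiseSyndetic A) (hAB : A ⊆ B) :
    PiecewiseSyndetic B := by
  obtain ⟨d, hd⟩ := hA
  exact ⟨d, fun k => (hd k).imp fun a ha => ⟨fun i hi => hAB (ha.1 i hi), ha.2⟩⟩

/-- A run of `L / (d + 1) + 1` points with gaps at most `d` fits in a window of length `L`,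
which for large `L` holds fewer points than that. -/
lemma LogSparse.not_piecewiseSyndetic {k : ℕ} {S : Set ℤ} (hS : LogSparse k S) :
    ¬ PiecewiseSyndetic {x : ℕ | (x : ℤ) ∈ S} := by
  rintro ⟨d, hd⟩
  obtain ⟨C, hC⟩ := hS
  obtain ⟨L, hL⟩ := exists_const_mul_pow_log_le k C (ε := 1 / (d + 1)) (by positivity)
  obtain ⟨a, ha, hchain⟩ := hd (L / (d + 1) + 1)
  have hK := le_ncard_inter_Icc_of_chain ha hchain
  have hlen : d * (L / (d + 1) + 1 - 1) ≤ L := by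
    rw [Nat.add_sub_cancel]
    exact (Nat.mul_le_mul_right _ (Nat.le_succ d)).trans (Nat.mul_div_le L (d + 1))
  have hwindow : (S ∩ Icc (a 0 : ℤ) (a 0 + d * (L / (d + 1) + 1 - 1) : ℕ)).ncard
      ≤ (S ∩ Icc (a 0 : ℤ) (a 0 + L)).ncard :=
    ncard_le_ncard (inter_subset_inter_right _
      (Icc_subset_Icc le_rfl (by exact_mod_cast Nat.add_le_add_left hlen _)))
      ((finite_Icc _ _).inter_of_right _)
  have hcount := (Nat.cast_le.2 (hK.trans hwindow)).trans ((hC _ L).trans hL)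
  have hfloor := Nat.lt_floor_add_one ((L : ℝ) / (d + 1))
  rw [← Nat.cast_add_one, Nat.floor_div_eq_div] at hfloor
  push_cast at hcount hfloor
  rw [one_div_mul_eq_div] at hcount
  linarith

/-! ### Lacunary sequences -/

section Lacunary

variable {R : ℕ → ℝ} {ρ : ℝ} {N : ℕ}

lemma pow_mul_le_of_lacunary (hρ : 0 ≤ ρ) (hlac : ∀ n ≥ N, ρ * R n ≤ R (n + 1)) {a : ℕ}
    (ha : N ≤ a) (e : ℕ) : ρ ^ e * R a ≤ R (a + e) := by
  induction e with
  | zero => simp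
  | succ e ih =>
    calc ρ ^ (e + 1) * R a = ρ * (ρ ^ e * R a) := by ring
      _ ≤ ρ * R (a + e) := by gcongr
      _ ≤ R (a + (e + 1)) := hlac _ (by omega)

lemma exists_gap_of_lacunary {r : ℕ → ℕ} (hr : Monotone r) (hρ : 1 < ρ)
    (hlac : ∀ n ≥ N, ρ * r n ≤ r (n + 1)) (K : ℝ) :
    ∃ T, ∀ a b, a + T ≤ b → N + T ≤ b → K * r a ≤ r b := by
  obtain ⟨T, hT⟩ := pow_unbounded_of_one_lt K hρ
  refine ⟨T, fun a b hab hNb => ?_⟩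
  calc K * r a ≤ ρ ^ T * r (max a N) := by
        gcongr
        exact hr (le_max_left a N)
    _ ≤ r (max a N + T) :=
        pow_mul_le_of_lacunary (R := fun n => (r n : ℝ)) (by linarith) hlac (le_max_right a N) T
    _ ≤ r b := Nat.cast_le.2 (hr (by omega))

def pinnedSums (u : ℕ → ℤ) (R : ℕ → ℝ) (T : Set ℤ) (N : ℕ) (c C : ℝ) : Set ℤ :=
  {v | ∃ n ≥ N, ∃ w ∈ T, u n + w = v ∧ c * R n ≤ |(v : ℝ)| ∧ |(v : ℝ)| ≤ C * R n}

variable (hρ : 1 < ρ) (hlac : ∀ n ≥ N, ρ * R n ≤ R (n + 1)) (hR : ∀ n ≥ N, 1 ≤ R n)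
  {c C : ℝ} (hc : 0 < c)
include hρ hlac hR hc

lemma pow_sub_le_of_abs_sub_le {a n : ℕ} (ha : N ≤ a) (han : a ≤ n) {v w : ℤ} {L : ℝ}
    (hvw : |(v : ℝ) - w| ≤ L) (hw : |(w : ℝ)| ≤ C * R a) (hv : c * R n ≤ |(v : ℝ)|) :
    ρ ^ (n - a) ≤ (C + L) / c := by
  have hRa := hR a ha
  have hgrow : ρ ^ (n - a) * R a ≤ R n := by
    simpa [Nat.add_sub_cancel' han] using pow_mul_le_of_lacunary (by linarith) hlac ha (n - a)
  have hvL : |(v : ℝ)| ≤ |(w : ℝ)| + L := by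
    have := abs_sub_abs_le_abs_sub (v : ℝ) w; linarith
  rw [le_div_iff₀ hc]
  refine le_of_mul_le_mul_right ?_ (zero_lt_one.trans_le hRa)
  nlinarith [(abs_nonneg _).trans hvw]

lemma exists_finset_of_pinned (hcC : c ≤ C) (M : ℤ) (L : ℕ) :
    ∃ P : Finset ℕ, (P.card : ℝ) ≤ Real.log ((C + L) / c) / Real.log ρ + 1 ∧
      ∀ n ≥ N, ∀ v ∈ Icc M (M + L), c * R n ≤ |(v : ℝ)| → |(v : ℝ)| ≤ C * R n → n ∈ P := by
  have hlogρ : 0 < Real.log ρ := Real.log_pos hρ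
  have hlog : 0 ≤ Real.log ((C + L) / c) / Real.log ρ := by
    refine div_nonneg (Real.log_nonneg ?_) hlogρ.le
    rw [le_div_iff₀ hc]; linarith [L.cast_nonneg (α := ℝ)]
  set Q := {n | N ≤ n ∧ ∃ v ∈ Icc M (M + L), c * R n ≤ |(v : ℝ)| ∧ |(v : ℝ)| ≤ C * R n}
  rcases Q.eq_empty_or_nonempty with hQ | hQ
  · refine ⟨∅, by simp only [Finset.card_empty, Nat.cast_zero]; linarith, fun n hn v hv h1 h2 => ?_⟩
    exact absurd (hQ.subset ⟨hn, v, hv, h1, h2⟩) (notMem_empty n)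
  -- every pinned index lies within `J` of the least one
  obtain ⟨haN, w, hwI, -, hw⟩ := Nat.sInf_mem hQ
  set J := ⌊Real.log ((C + L) / c) / Real.log ρ⌋₊
  refine ⟨Finset.Icc (sInf Q) (sInf Q + J), ?_, fun n hn v hv h1 h2 => ?_⟩
  · rw [Nat.card_Icc, show sInf Q + J + 1 - sInf Q = J + 1 by omega]
    push_cast
    linarith [Nat.floor_le hlog]
  have hle : sInf Q ≤ n := Nat.sInf_le ⟨hn, v, hv, h1, h2⟩
  have hvw : |(v : ℝ) - w| ≤ L := by
    obtain ⟨hv1, hv2⟩ := hv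
    obtain ⟨hw1, hw2⟩ := hwI
    exact_mod_cast abs_sub_le_iff.2 ⟨by omega, by omega⟩
  have hpow := pow_sub_le_of_abs_sub_le hρ hlac hR hc haN hle hvw hw h1
  have hgap : ((n - sInf Q : ℕ) : ℝ) ≤ Real.log ((C + L) / c) / Real.log ρ := by
    rw [le_div_iff₀ hlogρ, ← Real.log_pow]
    exact Real.log_le_log (pow_pos (by linarith) _) hpow
  have := Nat.le_floor hgap
  exact Finset.mem_Icc.2 ⟨hle, by omega⟩

/-- The pinned indices in a window are `O(log L)` many, so `pinnedSums` meets it inside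
`O(log L)` translates of `T`. -/
lemma LogSparse.pinnedSums {k : ℕ} {T : Set ℤ} (hT : LogSparse k T) (u : ℕ → ℤ) (hcC : c ≤ C) :
    LogSparse (k + 1) (pinnedSums u R T N c C) := by
  have hlogρ : 0 < Real.log ρ := Real.log_pos hρ
  set a := |Real.log ((C + 1) / c)|
  refine hT.of_subset_translates ((a + 1) / Real.log ρ + 1) fun M L => ?_
  obtain ⟨P, hP, hpin⟩ := exists_finset_of_pinned hρ hlac hR hc hcC M L
  refine ⟨P.image u, ?_, ?_⟩
  · have hL0 : (0 : ℝ) ≤ L := L.cast_nonneg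
    have hL : 0 ≤ Real.log (L + 1) := Real.log_nonneg (by linarith)
    have hCL : 0 < (C + L) / c := div_pos (by linarith) hc
    have hsplit : Real.log ((C + L) / c) ≤ a + Real.log (L + 1) := by
      calc Real.log ((C + L) / c) ≤ Real.log ((C + 1) / c * (L + 1)) := by
            gcongr
            rw [div_mul_eq_mul_div]; gcongr; nlinarith
        _ = Real.log ((C + 1) / c) + Real.log (L + 1) :=
            Real.log_mul (div_pos (by linarith) hc).ne' (by positivity)
        _ ≤ a + Real.log (L + 1) := by gcongr; exact le_abs_self _
    calc ((P.image u).card : ℝ) ≤ P.card := by exact_mod_cast Finset.card_image_le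
      _ ≤ (a + Real.log (L + 1)) / Real.log ρ + 1 := hP.trans (by gcongr)
      _ ≤ ((a + 1) / Real.log ρ + 1) * (1 + Real.log (L + 1)) := by
          rw [div_add_one hlogρ.ne', div_add_one hlogρ.ne', div_mul_eq_mul_div]
          gcongr
          nlinarith [abs_nonneg (Real.log ((C + 1) / c))]
  · rintro v ⟨⟨n, hn, w, hw, rfl, h1, h2⟩, hvI⟩
    exact mem_iUnion₂.2 ⟨u n, Finset.mem_image_of_mem u (hpin n hn _ hvI h1 h2), w, hw, rfl⟩

end Lacunary

/-! ### Counting sums of sequences of the order of `r` -/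

def IsComparable (r : ℕ → ℕ) (u : ℕ → ℤ) : Prop :=
  ∃ D : ℕ, ∃ β Γ : ℝ, 0 < β ∧ (∀ n, |(u n : ℝ)| ≤ Γ * r (n + D)) ∧
    ∀ᶠ n in atTop, β * r (n + D) ≤ |(u n : ℝ)|

section Counting

open scoped Classical

variable {r : ℕ → ℕ} {s : Multiset (ℕ → ℤ)}

lemma exists_uniform_of_isComparable (hs : ∀ u ∈ s, IsComparable r u) :
    ∃ β Γ : ℝ, ∃ N Dmax : ℕ, 0 < β ∧ 0 ≤ Γ ∧ ∀ u ∈ s, ∃ D ≤ Dmax,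
      (∀ n, |(u n : ℝ)| ≤ Γ * r (n + D)) ∧ ∀ n ≥ N, β * r (n + D) ≤ |(u n : ℝ)| := by
  induction s using Multiset.induction_on with
  | empty => exact ⟨1, 0, 0, 0, one_pos, le_rfl, by simp⟩
  | cons u s ih =>
    obtain ⟨D₀, β₀, Γ₀, hβ₀, hup₀, hlow₀⟩ := hs u (Multiset.mem_cons_self u s)
    obtain ⟨N₀, hlow₀⟩ := eventually_atTop.1 hlow₀
    obtain ⟨β, Γ, N, Dmax, hβ, hΓ, h⟩ := ih fun v hv => hs v (Multiset.mem_cons_of_mem hv)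
    refine ⟨min β₀ β, max Γ₀ Γ, max N₀ N, max D₀ Dmax, lt_min hβ₀ hβ, le_max_of_le_right hΓ,
      fun v hv => ?_⟩
    rcases Multiset.mem_cons.1 hv with rfl | hv
    · refine ⟨D₀, le_max_left _ _, fun n => ?_, fun n hn => ?_⟩
      · exact (hup₀ n).trans (by gcongr; exact le_max_left _ _)
      · exact le_trans (by gcongr; exact min_le_left _ _) (hlow₀ n (le_of_max_le_left hn))
    · obtain ⟨D, hD, hup, hlow⟩ := h v hv
      refine ⟨D, le_max_of_le_right hD, fun n => ?_, fun n hn => ?_⟩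
      · exact (hup n).trans (by gcongr; exact le_max_right _ _)
      · exact le_trans (by gcongr; exact min_le_right _ _) (hlow n (le_of_max_le_right hn))

section Cover

variable {Nr : ℕ} {β Γ : ℝ} {N Dmax T Nbig : ℕ} (hr : StrictMono r) (hβ : 0 < β) (hΓ : 0 ≤ Γ)
  (hunif : ∀ u ∈ s, ∃ D ≤ Dmax,
    (∀ n, |(u n : ℝ)| ≤ Γ * r (n + D)) ∧ ∀ n ≥ N, β * r (n + D) ≤ |(u n : ℝ)|)
  (hT : ∀ a b, a + T ≤ b → Nr + T ≤ b → 2 * Multiset.card s * Γ / β * r a ≤ r b)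
  (hNbig : N + Nr + T + Dmax < Nbig)
include hr hβ hΓ hunif hT hNbig

/-- Terms of index at most `n₁ - T - Dmax` add up to at most half the lower bound of the
term of index `n₁`, which therefore dominates. -/
lemma add_mem_pinnedSums {u₁ : ℕ → ℤ} (hu₁ : u₁ ∈ s) {n₁ : ℕ} (hn₁ : Nbig ≤ n₁) {w : ℤ}
    (hw : w ∈ sumsOver (s.erase u₁) {n | n + (T + Dmax) ≤ n₁}) :
    u₁ n₁ + w ∈ ⋃ D ∈ Finset.range (Dmax + 1), pinnedSums u₁ (fun n => (r (n + D) : ℝ))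
      (sumsOver (s.erase u₁) univ) Nbig (β / 2) (Γ + β / 2) := by
  obtain ⟨D₁, hD₁, hup₁, hlow₁⟩ := hunif u₁ hu₁
  have hterm : ∀ u ∈ s.erase u₁, ∀ n ∈ {n | n + (T + Dmax) ≤ n₁},
      |(u n : ℝ)| ≤ Γ * r (n₁ - T) := by
    intro u hu n (hn : n + (T + Dmax) ≤ n₁)
    obtain ⟨D, hD, hup, -⟩ := hunif u (Multiset.mem_of_mem_erase hu)
    exact (hup n).trans (by gcongr; exact hr.monotone (by omega))
  have hwle : |(w : ℝ)| ≤ β / 2 * r (n₁ + D₁) :=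
    calc |(w : ℝ)| ≤ Multiset.card (s.erase u₁) * (Γ * r (n₁ - T)) :=
          abs_le_of_mem_sumsOver hterm hw
      _ ≤ Multiset.card s * (Γ * r (n₁ - T)) := by gcongr; exact Multiset.erase_le u₁ s
      _ = β / 2 * (2 * Multiset.card s * Γ / β * r (n₁ - T)) := by field_simp
      _ ≤ β / 2 * r (n₁ + D₁) := by gcongr; exact hT _ _ (by omega) (by omega)
  have hlow := hlow₁ n₁ (by omega)
  have hup := hup₁ n₁
  have hsub := abs_add_le ((u₁ n₁ : ℝ) + w) (-(w : ℝ))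
  rw [add_neg_cancel_right, abs_neg] at hsub
  refine mem_iUnion₂.2 ⟨D₁, Finset.mem_range.2 (by omega), n₁, hn₁, w,
    sumsOver_mono (subset_univ _) hw, rfl, ?_, ?_⟩
  · push_cast; linarith
  · push_cast; linarith [abs_add_le (u₁ n₁ : ℝ) w]

/-- For `n₁ = n₂ + t`, `u₁ n₁ + u₂ n₂` is the value at `n₂` of the merged sequence
`n ↦ u₁ (n + t) + u₂ n`. -/
lemma sumsOver_subset_cover :
    sumsOver s univ ⊆ (sumsOver s (Iio Nbig) ∪
      ⋃ u₁ ∈ s.toFinset, ⋃ u₂ ∈ (s.erase u₁).toFinset, ⋃ t ∈ Finset.range (T + Dmax),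
        sumsOver ((fun n => u₁ (n + t) + u₂ n) ::ₘ (s.erase u₁).erase u₂) univ) ∪
      ⋃ u ∈ s.toFinset, ⋃ D ∈ Finset.range (Dmax + 1), pinnedSums u (fun n => (r (n + D) : ℝ))
        (sumsOver (s.erase u) univ) Nbig (β / 2) (Γ + β / 2) := by
  intro v hv
  rcases eq_or_ne s 0 with rfl | hs0
  · exact Or.inl (Or.inl (by simpa using hv))
  obtain ⟨u₁, hu₁, n₁, w, hw, rfl⟩ := exists_add_mem_sumsOver_Iic hs0 hv
  by_cases hn₁ : n₁ < Nbig
  · exact Or.inl (Or.inl (add_mem_sumsOver_erase hu₁ (mem_Iio.2 hn₁)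
      (sumsOver_mono (Iic_subset_Iio.2 hn₁) hw)))
  rw [not_lt] at hn₁
  rcases mem_sumsOver_or_exists_add (J := {n | n + (T + Dmax) ≤ n₁}) hw with
    hwJ | ⟨u₂, hu₂, n₂, ⟨hn₂ : n₂ ≤ n₁, hn₂J⟩, w', hw', rfl⟩
  · exact Or.inr (mem_iUnion₂.2 ⟨u₁, Multiset.mem_toFinset.2 hu₁,
      add_mem_pinnedSums hr hβ hΓ hunif hT hNbig hu₁ hn₁ hwJ⟩)
  · have hn₂J : n₁ < n₂ + (T + Dmax) := not_le.1 hn₂J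
    refine Or.inl (Or.inr (mem_iUnion₂.2 ⟨u₁, Multiset.mem_toFinset.2 hu₁, mem_iUnion₂.2
      ⟨u₂, Multiset.mem_toFinset.2 hu₂, mem_iUnion₂.2 ⟨n₁ - n₂, Finset.mem_range.2 (by omega),
        mem_sumsOver_cons.2 ⟨n₂, mem_univ _, w', sumsOver_mono (subset_univ _) hw', ?_⟩⟩⟩⟩))
    rw [Nat.add_sub_cancel' hn₂]
    ring

end Cover

variable {ρ : ℝ} {Nr : ℕ}

lemma logSparse_sumsOver_of_isComparable (hr : StrictMono r) (hρ : 1 < ρ)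
    (hlac : ∀ n ≥ Nr, ρ * r n ≤ r (n + 1)) {m : ℕ} (hs : ∀ u ∈ s, IsComparable r u)
    (herase : ∀ u ∈ s, LogSparse m (sumsOver (s.erase u) univ))
    (hmerge : ∀ u₁ ∈ s, ∀ u₂ ∈ s.erase u₁, ∀ t : ℕ,
      LogSparse m (sumsOver ((fun n => u₁ (n + t) + u₂ n) ::ₘ (s.erase u₁).erase u₂) univ)) :
    LogSparse (m + 1) (sumsOver s univ) := by
  obtain ⟨β, Γ, N, Dmax, hβ, hΓ, hunif⟩ := exists_uniform_of_isComparable hs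
  obtain ⟨T, hT⟩ := exists_gap_of_lacunary hr.monotone hρ hlac (2 * Multiset.card s * Γ / β)
  set Nbig := N + Nr + T + Dmax + 1
  refine LogSparse.mono (LogSparse.union (LogSparse.union
    (LogSparse.of_finite (finite_Iio Nbig).sumsOver)
    (LogSparse.biUnion _ fun u₁ hu₁ => LogSparse.biUnion _ fun u₂ hu₂ => LogSparse.biUnion _
      fun t _ => ?_))
    (LogSparse.biUnion _ fun u hu => LogSparse.biUnion _ fun D _ => ?_))
    (sumsOver_subset_cover hr hβ hΓ hunif hT (lt_add_one _)) le_rfl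
  · exact (hmerge u₁ (Multiset.mem_toFinset.1 hu₁) u₂ (Multiset.mem_toFinset.1 hu₂) t).mono
      subset_rfl m.le_succ
  · exact (herase u (Multiset.mem_toFinset.1 hu)).pinnedSums hρ
      (fun n hn => by simpa [add_right_comm] using hlac (n + D) (by omega))
      (fun n hn => Nat.one_le_cast.2 ((by omega : 1 ≤ n + D).trans hr.le_apply)) (half_pos hβ)
      u (by linarith)

theorem logSparse_sumsOver (hr : StrictMono r) (hρ : 1 < ρ) (hlac : ∀ n ≥ Nr, ρ * r n ≤ r (n + 1))
    {U : Set (ℕ → ℤ)} (hU_add : ∀ u ∈ U, ∀ v ∈ U, ∀ t : ℕ, (fun n => u (n + t) + v n) ∈ U)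
    (hU : ∀ u ∈ U, u = 0 ∨ IsComparable r u) (hs : ∀ u ∈ s, u ∈ U) :
    LogSparse (Multiset.card s) (sumsOver s univ) := by
  obtain ⟨m, hm⟩ : ∃ m, Multiset.card s = m := ⟨_, rfl⟩
  induction m generalizing s with
  | zero => simp [Multiset.card_eq_zero.1 hm, LogSparse.of_finite]
  | succ m ih =>
    have herase : ∀ u ∈ s, LogSparse m (sumsOver (s.erase u) univ) := fun u hu => by
      have hcard : Multiset.card (s.erase u) = m := by
        rw [Multiset.card_erase_of_mem hu, hm, Nat.pred_succ]
      simpa [hcard] using ih (fun v hv => hs v (Multiset.mem_of_mem_erase hv)) hcard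
    rw [hm]
    by_cases h0 : (0 : ℕ → ℤ) ∈ s
    · rw [← sumsOver_erase_zero h0]
      exact (herase 0 h0).mono subset_rfl m.le_succ
    refine logSparse_sumsOver_of_isComparable hr hρ hlac
      (fun u hu => (hU u (hs u hu)).resolve_left fun h => h0 (h ▸ hu)) herase
      fun u₁ hu₁ u₂ hu₂ t => ?_
    have hcard : Multiset.card ((fun n => u₁ (n + t) + u₂ n) ::ₘ (s.erase u₁).erase u₂) = m := by
      have hpos := Multiset.card_pos_iff_exists_mem.2 ⟨u₂, hu₂⟩
      rw [Multiset.card_erase_of_mem hu₁, hm, Nat.pred_succ] at hpos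
      rw [Multiset.card_cons, Multiset.card_erase_of_mem hu₂, Multiset.card_erase_of_mem hu₁, hm,
        Nat.pred_succ, Nat.pred_eq_sub_one, Nat.sub_add_cancel hpos]
    have hmem : ∀ v ∈ (fun n => u₁ (n + t) + u₂ n) ::ₘ (s.erase u₁).erase u₂, v ∈ U := by
      intro v hv
      rcases Multiset.mem_cons.1 hv with rfl | hv
      · exact hU_add u₁ (hs u₁ hu₁) u₂ (hs u₂ (Multiset.mem_of_mem_erase hu₂)) t
      · exact hs v (Multiset.mem_of_mem_erase (Multiset.mem_of_mem_erase hv))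
    exact hcard ▸ ih hmem hcard

end Counting

/-! ### Operators on a sequence -/

abbrev shift : Module.End ℤ (ℕ → ℤ) := LinearMap.funLeft ℤ ℤ (· + 1)

lemma shift_pow_apply (t : ℕ) (u : ℕ → ℤ) (n : ℕ) : (shift ^ t) u n = u (n + t) := by
  induction t generalizing n with
  | zero => rfl
  | succ t ih =>
    rw [pow_succ', Module.End.mul_apply, LinearMap.funLeft_apply, ih, add_right_comm]; rfl

/-- The operator associated to the coefficients `(a₀, …, a_d)` of `p`: `p(shift)` applied to `r`,
that is `n ↦ ∑ aᵢ r (n + i)` (`operator_apply`). -/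
noncomputable def operator (r : ℕ → ℕ) (p : ℤ[X]) : ℕ → ℤ := aeval shift p fun n => (r n : ℤ)

lemma operator_apply (r : ℕ → ℕ) (p : ℤ[X]) (n : ℕ) :
    operator r p n = ∑ i ∈ Finset.range (p.natDegree + 1), p.coeff i * r (n + i) := by
  simp [operator, aeval_eq_sum_range, shift_pow_apply]

@[simp]
lemma operator_zero (r : ℕ → ℕ) : operator r 0 = 0 := by
  simp [operator]

lemma operator_X_pow_mul_add (r : ℕ → ℕ) (t : ℕ) (p q : ℤ[X]) :
    operator r (X ^ t * p + q) = fun n => operator r p (n + t) + operator r q n := by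
  funext n
  simp [operator, shift_pow_apply]

lemma operator_modByMonic {r : ℕ → ℕ} {μ : ℤ[X]} (hμ : operator r μ = 0) (p : ℤ[X]) :
    operator r (p %ₘ μ) = operator r p := by
  conv_rhs => rw [← modByMonic_add_div p μ, mul_comm]
  unfold operator at hμ ⊢
  rw [map_add, map_mul, LinearMap.add_apply, Module.End.mul_apply, hμ, map_zero, add_zero]

section Asymptotics

variable {r : ℕ → ℕ}

lemma abs_operator_le (hr : Monotone r) (p : ℤ[X]) (n : ℕ) :
    |(operator r p n : ℝ)| ≤ (∑ i ∈ Finset.range (p.natDegree + 1), |(p.coeff i : ℝ)|) *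
      r (n + p.natDegree) := by
  rw [operator_apply, Finset.sum_mul]
  push_cast
  refine (Finset.abs_sum_le_sum_abs _ _).trans (Finset.sum_le_sum fun i hi => ?_)
  rw [abs_mul, Nat.abs_cast]
  gcongr
  exact hr (by simp at hi; omega)

lemma StrictMono.natCast_pos (hr : StrictMono r) {n : ℕ} (hn : 0 < n) : (0 : ℝ) < r n :=
  Nat.cast_pos.2 (hn.trans_le hr.le_apply)

lemma isComparable_of_tendsto (hr : StrictMono r) {u : ℕ → ℤ} {D : ℕ} {Γ : ℝ}
    (hup : ∀ n, |(u n : ℝ)| ≤ Γ * r (n + D)) {ℓ : ℝ} (hℓ : ℓ ≠ 0)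
    (h : Tendsto (fun n => (u n : ℝ) / r (n + D)) atTop (nhds ℓ)) : IsComparable r u := by
  refine ⟨D, |ℓ| / 2, Γ, by positivity, hup, ?_⟩
  filter_upwards [h.abs.eventually (lt_mem_nhds (half_lt_self (abs_pos.2 hℓ))),
    eventually_ge_atTop 1] with n hn h1
  rw [abs_div, Nat.abs_cast, lt_div_iff₀ (hr.natCast_pos (by omega))] at hn
  exact hn.le

lemma tendsto_ratio_pow (hr : StrictMono r) {θ : ℝ}
    (h : Tendsto (fun n => (r (n + 1) : ℝ) / r n) atTop (nhds θ)) (i : ℕ) :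
    Tendsto (fun n => (r (n + i) : ℝ) / r n) atTop (nhds (θ ^ i)) := by
  induction i with
  | zero =>
    refine tendsto_const_nhds.congr' ?_
    filter_upwards [eventually_gt_atTop 0] with n hn
    simp [(hr.natCast_pos hn).ne']
  | succ i ih =>
    rw [pow_succ']
    refine ((h.comp (tendsto_add_atTop_nat i)).mul ih).congr' ?_
    filter_upwards [eventually_gt_atTop 0] with n hn
    simp only [Function.comp_apply]
    rw [div_mul_div_cancel₀ (hr.natCast_pos (by omega)).ne', add_assoc]

lemma tendsto_operator_div (hr : StrictMono r) {θ : ℝ}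
    (h : Tendsto (fun n => (r (n + 1) : ℝ) / r n) atTop (nhds θ)) (p : ℤ[X]) :
    Tendsto (fun n => (operator r p n : ℝ) / r n) atTop (nhds (aeval θ p)) := by
  simp_rw [operator_apply, aeval_eq_sum_range, zsmul_eq_mul]
  push_cast
  simp_rw [Finset.sum_div, mul_div_assoc]
  exact tendsto_finsetSum _ fun i _ => (tendsto_ratio_pow hr h i).const_mul _

lemma isComparable_operator_of_aeval_ne_zero (hr : StrictMono r) {θ : ℝ} (hθ : 1 < θ)
    (h : Tendsto (fun n => (r (n + 1) : ℝ) / r n) atTop (nhds θ)) {p : ℤ[X]}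
    (hp : aeval θ p ≠ 0) : IsComparable r (operator r p) := by
  have hθD : θ ^ p.natDegree ≠ 0 := pow_ne_zero _ (by linarith)
  refine isComparable_of_tendsto hr (abs_operator_le hr.monotone p) (div_ne_zero hp hθD)
    (((tendsto_operator_div hr h p).div (tendsto_ratio_pow hr h _) hθD).congr' ?_)
  filter_upwards [eventually_gt_atTop 0] with n hn
  exact div_div_div_cancel_right₀ (hr.natCast_pos hn).ne' _ _

lemma tendsto_ratio_of_lt (hr : StrictMono r)
    (h : Tendsto (fun n => (r (n + 1) : ℝ) / r n) atTop atTop) {i D : ℕ} (hi : i < D) :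
    Tendsto (fun n => (r (n + i) : ℝ) / r (n + D)) atTop (nhds 0) := by
  have hinv : Tendsto (fun n => ((r (n + (D - 1) + 1) : ℝ) / r (n + (D - 1)))⁻¹) atTop (nhds 0) :=
    (h.comp (tendsto_add_atTop_nat (D - 1))).inv_tendsto_atTop
  refine tendsto_of_tendsto_of_tendsto_of_le_of_le' tendsto_const_nhds hinv
    (Eventually.of_forall fun n => by positivity) ?_
  filter_upwards [eventually_gt_atTop 0] with n hn
  rw [inv_div, show n + (D - 1) + 1 = n + D by omega]
  gcongr
  exact hr.monotone (by omega)

lemma isComparable_operator_of_ne_zero (hr : StrictMono r)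
    (h : Tendsto (fun n => (r (n + 1) : ℝ) / r n) atTop atTop) {p : ℤ[X]} (hp : p ≠ 0) :
    IsComparable r (operator r p) := by
  have hlim : Tendsto (fun n => (operator r p n : ℝ) / r (n + p.natDegree)) atTop
      (nhds (∑ i ∈ Finset.range p.natDegree, (p.coeff i : ℝ) * 0 + p.leadingCoeff * 1)) := by
    refine Tendsto.congr' ?_ ((tendsto_finsetSum _ fun i hi =>
      (tendsto_ratio_of_lt hr h (Finset.mem_range.1 hi)).const_mul (p.coeff i : ℝ)).add
      tendsto_const_nhds)
    filter_upwards [eventually_gt_atTop 0] with n hn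
    rw [operator_apply, Finset.sum_range_succ]
    push_cast
    rw [add_div, Finset.sum_div, mul_div_assoc _ (r (n + p.natDegree) : ℝ),
      div_self (hr.natCast_pos (by omega)).ne', leadingCoeff]
    simp_rw [mul_div_assoc]
  refine isComparable_of_tendsto hr (abs_operator_le hr.monotone p) ?_ hlim
  simpa using hp

end Asymptotics

/-! ### Regular sequences -/

lemma eq_zero_of_aeval_eq_zero_of_degree_lt {A : Type*} [Ring A] [Algebra ℚ A] {θ : A}
    {μ q : ℤ[X]} (hμ : μ.map (algebraMap ℤ ℚ) = minpoly ℚ θ) (hdeg : q.degree < μ.degree)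
    (hq : aeval θ q = 0) : q = 0 := by
  have hinj : Function.Injective (algebraMap ℤ ℚ) := (algebraMap ℤ ℚ).injective_int
  by_contra hne
  have := minpoly.degree_le_of_ne_zero ℚ θ ((Polynomial.map_ne_zero_iff hinj).2 hne)
    (by rwa [aeval_map_algebraMap])
  rw [← hμ, degree_map_eq_of_injective hinj, degree_map_eq_of_injective hinj] at this
  exact absurd hdeg (not_lt.2 this)

namespace IsRegularSequence

variable {r : ℕ → ℕ}

lemma exists_lacunary (hr : IsRegularSequence r) :
    ∃ ρ : ℝ, 1 < ρ ∧ ∃ N, ∀ n ≥ N, ρ * r n ≤ r (n + 1) := by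
  obtain ⟨ρ, hρ, hev⟩ : ∃ ρ : ℝ, 1 < ρ ∧ ∀ᶠ n in atTop, ρ < (r (n + 1) : ℝ) / r n := by
    rcases hr.2 with h | ⟨θ, hθ, h, -⟩
    · exact ⟨2, one_lt_two, h.eventually_gt_atTop 2⟩
    · exact ⟨(1 + θ) / 2, by linarith, h.eventually (lt_mem_nhds (by linarith))⟩
  obtain ⟨N, hN⟩ := eventually_atTop.1 (hev.and (eventually_gt_atTop 0))
  refine ⟨ρ, hρ, N, fun n hn => ?_⟩
  obtain ⟨hlt, hpos⟩ := hN n hn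
  exact ((lt_div_iff₀ (hr.1.natCast_pos hpos)).1 hlt).le

lemma operator_eq_zero_or_isComparable (hr : IsRegularSequence r) (p : ℤ[X]) :
    operator r p = 0 ∨ IsComparable r (operator r p) := by
  obtain ⟨hmono, h | ⟨θ, hθ, h, halg⟩⟩ := hr
  · rcases eq_or_ne p 0 with rfl | hp
    · exact Or.inl (operator_zero r)
    · exact Or.inr (isComparable_operator_of_ne_zero hmono h hp)
  by_cases hθalg : IsAlgebraic ℚ θ
  · -- reduce `p` modulo the characteristic polynomial `μ` of the recurrence, which kills `r`
    obtain ⟨k, -, c, hrec, hmin⟩ := halg hθalg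
    set μ : ℤ[X] := X ^ k - ∑ i ∈ Finset.range k, C (c i) * X ^ i
    have hμ : operator r μ = 0 := by
      funext n
      simp [μ, operator, shift_pow_apply, hrec]
    have hμmonic : μ.Monic := monic_X_pow_sub <| (degree_sum_le _ _).trans_lt <|
      (Finset.sup_lt_iff (WithBot.bot_lt_coe k)).2 fun i hi =>
        (degree_C_mul_X_pow_le _ _).trans_lt (WithBot.coe_lt_coe.2 (Finset.mem_range.1 hi))
    have hμmap : μ.map (algebraMap ℤ ℚ) = minpoly ℚ θ := by
      simp [μ, ← hmin, Polynomial.map_sub, Polynomial.map_sum]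
    rw [← operator_modByMonic hμ p]
    by_cases hq : aeval θ (p %ₘ μ) = 0
    · left
      rw [eq_zero_of_aeval_eq_zero_of_degree_lt hμmap (degree_modByMonic_lt p hμmonic) hq, operator_zero]
    · exact Or.inr (isComparable_operator_of_aeval_ne_zero hmono hθ h hq)
  · by_cases hp : aeval θ p = 0
    · left
      have hp0 : p = 0 := by
        by_contra hne
        exact hθalg (IsAlgebraic.extendScalars (algebraMap ℤ ℚ).injective_int ⟨p, hne, hp⟩)
      rw [hp0, operator_zero]
    · exact Or.inr (isComparable_operator_of_aeval_ne_zero hmono hθ h hp)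

end IsRegularSequence

/-- for a regular sequence `r` and operators `f₁, …, f_k` on `r`,
the set of natural numbers of the form `f₁(n₁) + ⋯ + f_k(n_k)` is not
piecewise syndetic. -/
theorem image_of_operators_not_piecewiseSyndetic
    (r : ℕ → ℕ) (hr : IsRegularSequence r) (k : ℕ)
    (f : Fin k → ℕ → ℤ)
    (hf : ∀ j : Fin k, ∃ d : ℕ, ∃ a : ℕ → ℤ, a d ≠ 0 ∧
      ∀ n : ℕ, f j n = ∑ i ∈ Finset.range (d + 1), a i * (r (n + i) : ℤ)) :
    ¬ PiecewiseSyndetic {x : ℕ | ∃ n : Fin k → ℕ, (∑ j, f j (n j)) = (x : ℤ)} := by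
  obtain ⟨ρ, hρ, N, hlac⟩ := hr.exists_lacunary
  have hfU : ∀ j, f j ∈ range (operator r) := fun j => by
    obtain ⟨d, a, -, hfa⟩ := hf j
    refine ⟨∑ i ∈ Finset.range (d + 1), C (a i) * X ^ i, funext fun n => ?_⟩
    simp [operator, hfa, shift_pow_apply]
  have hsparse := logSparse_sumsOver (U := range (operator r)) hr.1 hρ hlac
    (by
      rintro _ ⟨p, rfl⟩ _ ⟨q, rfl⟩ t
      exact ⟨X ^ t * p + q, operator_X_pow_mul_add r t p q⟩)
    (by
      rintro _ ⟨p, rfl⟩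
      exact hr.operator_eq_zero_or_isComparable p)
    (s := Finset.univ.val.map f) (by simpa using hfU)
  refine fun hPS => hsparse.not_piecewiseSyndetic (hPS.mono ?_)
  rintro x ⟨n, hn⟩
  show (x : ℤ) ∈ sumsOver (Finset.univ.val.map f) univ
  rw [← hn]
  exact sum_apply_mem_sumsOver _ f n
end

section
/- Let R=(r_n) and R'=(r'_n) be strictly increasing sequences of natural numbers with r_{n+1}/r_n → θ and r'_{n+1}/r'_n → θ', where θ, θ' are real numbers with 1 < θ ≤ θ'. Then for all integers a_0,…,a_d, the sequence (Σ_{i=0}^d a_i (r_{n+i} + r'_{n+i})) / (r_n + r'_n) converges to Σ_{i=0}^d a_i θ'^i as n → ∞. -/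
open Filter Topology

/-!
With `w n = r n / (r n + r' n)`, the quotient `(r (n+i) + r' (n+i)) / (r n + r' n)` is the convex
combination `w n * (r (n+i) / r n) + (1 - w n) * (r' (n+i) / r' n)` of two ratios tending to `θ ^ i`
and `θ' ^ i`. If `θ = θ'` the two limits agree. If `θ < θ'`, the consecutive ratios of `r n / r' n`
tend to `θ / θ' < 1`, so by the ratio test `r n / r' n`, and with it `w n`, tends to `0`. Either way
the quotient tends to `θ' ^ i`, and the theorem follows by linearity.
-/

lemma StrictMono.eventually_natCast_pos {r : ℕ → ℕ} (hr : StrictMono r) :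
    ∀ᶠ n in atTop, (0 : ℝ) < r n := by
  filter_upwards [eventually_ge_atTop 1] with n hn
  exact_mod_cast hn.trans hr.le_apply

lemma tendsto_div_add_of_tendsto_succ_div {u : ℕ → ℝ} {θ : ℝ} (hu : ∀ᶠ n in atTop, u n ≠ 0)
    (h : Tendsto (fun n => u (n + 1) / u n) atTop (𝓝 θ)) (i : ℕ) :
    Tendsto (fun n => u (n + i) / u n) atTop (𝓝 (θ ^ i)) := by
  induction i with
  | zero =>
    refine tendsto_const_nhds.congr' ?_
    filter_upwards [hu] with n hn
    simp [hn]
  | succ i ih =>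
    rw [pow_succ']
    refine ((h.comp (tendsto_add_atTop_nat i)).mul ih).congr' ?_
    filter_upwards [(tendsto_add_atTop_nat i).eventually hu] with n hni
    simp only [Function.comp_apply, ← add_assoc]
    exact div_mul_div_cancel₀ hni

lemma tendsto_div_zero_of_tendsto_succ_div_lt {u v : ℕ → ℝ} {θ θ' : ℝ}
    (hu : ∀ᶠ n in atTop, 0 < u n) (hv : ∀ᶠ n in atTop, 0 < v n)
    (h₁ : Tendsto (fun n => u (n + 1) / u n) atTop (𝓝 θ))
    (h₂ : Tendsto (fun n => v (n + 1) / v n) atTop (𝓝 θ')) (hθ' : 0 < θ') (hlt : θ < θ') :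
    Tendsto (fun n => u n / v n) atTop (𝓝 0) := by
  refine (summable_of_ratio_test_tendsto_lt_one ((div_lt_one hθ').2 hlt) ?_ ?_).tendsto_atTop_zero
  · filter_upwards [hu, hv] with n hun hvn using (div_pos hun hvn).ne'
  · refine (h₁.div h₂ hθ'.ne').congr' ?_
    filter_upwards [hu, hv, (tendsto_add_atTop_nat 1).eventually hu,
      (tendsto_add_atTop_nat 1).eventually hv] with n hun hvn hun₁ hvn₁
    rw [Pi.div_apply, Real.norm_of_nonneg (div_pos hun₁ hvn₁).le,
      Real.norm_of_nonneg (div_pos hun hvn).le]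
    field_simp

lemma tendsto_add_div_add {ι : Type*} {l : Filter ι} {p q x y : ι → ℝ} {α β : ℝ}
    (hx : ∀ᶠ n in l, 0 < x n) (hy : ∀ᶠ n in l, 0 < y n)
    (hp : Tendsto (fun n => p n / x n) l (𝓝 α)) (hq : Tendsto (fun n => q n / y n) l (𝓝 β))
    (h : α = β ∨ Tendsto (fun n => x n / y n) l (𝓝 0)) :
    Tendsto (fun n => (p n + q n) / (x n + y n)) l (𝓝 β) := by
  set w := fun n => x n / (x n + y n)
  have hw : ∀ᶠ n in l, 0 ≤ w n ∧ w n ≤ 1 ∧ w n ≤ x n / y n := by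
    filter_upwards [hx, hy] with n hxn hyn
    refine ⟨by positivity, (div_le_one (by positivity)).2 (by linarith), ?_⟩
    exact div_le_div_of_nonneg_left hxn.le hyn (by linarith)
  have hsmall : Tendsto (fun n => w n * (p n / x n - q n / y n)) l (𝓝 0) := by
    rcases h with rfl | hxy
    · refine isBoundedUnder_le_mul_tendsto_zero ?_ (by simpa using hp.sub hq)
      refine isBoundedUnder_of_eventually_le (a := 1) ?_
      filter_upwards [hw] with n hwn
      simpa [abs_of_nonneg hwn.1] using hwn.2.1
    · have hw₀ : Tendsto w l (𝓝 0) :=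
        squeeze_zero' (hw.mono fun _ h => h.1) (hw.mono fun _ h => h.2.2) hxy
      simpa using hw₀.mul (hp.sub hq)
  -- `(p + q) / (x + y) = q / y + w * (p / x - q / y)`
  have hlim := hq.add hsmall
  rw [add_zero] at hlim
  refine hlim.congr' ?_
  filter_upwards [hx, hy] with n hxn hyn
  simp only [w]
  field_simp
  ring

/-- if `r (n+1) / r n → θ` and `r' (n+1) / r' n → θ'` with
`1 < θ ≤ θ'`, then for all integers `a₀, …, a_d`,
`(∑ᵢ aᵢ (r (n+i) + r' (n+i))) / (r n + r' n) → ∑ᵢ aᵢ θ'^i`. -/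
theorem sum_sequence_operator_ratio_tendsto
    (r r' : ℕ → ℕ) (hr : StrictMono r) (hr' : StrictMono r')
    (θ θ' : ℝ) (hθ : 1 < θ) (hθθ' : θ ≤ θ')
    (h1 : Tendsto (fun n => (r (n + 1) : ℝ) / r n) atTop (nhds θ))
    (h2 : Tendsto (fun n => (r' (n + 1) : ℝ) / r' n) atTop (nhds θ'))
    (d : ℕ) (a : ℕ → ℤ) :
    Tendsto
      (fun n =>
        (∑ i ∈ Finset.range (d + 1), (a i : ℝ) * ((r (n + i) : ℝ) + (r' (n + i) : ℝ))) /
          ((r n : ℝ) + (r' n : ℝ)))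
      atTop (nhds (∑ i ∈ Finset.range (d + 1), (a i : ℝ) * θ' ^ i)) := by
  have hx := hr.eventually_natCast_pos
  have hy := hr'.eventually_natCast_pos
  have hθ' : 0 < θ' := by linarith
  have hterm (i : ℕ) : Tendsto (fun n => ((r (n + i) : ℝ) + r' (n + i)) / (r n + r' n))
      atTop (𝓝 (θ' ^ i)) :=
    tendsto_add_div_add hx hy
      (tendsto_div_add_of_tendsto_succ_div (hx.mono fun _ h => h.ne') h1 i)
      (tendsto_div_add_of_tendsto_succ_div (hy.mono fun _ h => h.ne') h2 i)
      (hθθ'.eq_or_lt.imp (congrArg (· ^ i))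
        (tendsto_div_zero_of_tendsto_succ_div_lt hx hy h1 h2 hθ'))
  simpa only [Finset.sum_div, mul_div_assoc] using
    tendsto_finsetSum (Finset.range (d + 1)) fun i _ => (hterm i).const_mul (a i : ℝ)
end
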